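/- Let c be an exclusive cycle in a directed graph E, v ∈ c⁰, and N_c = M(X) the graded module over L_K(E) built from the reduced branching system X based at v. For any pq* ∈ Y with s(p) ∈ c⁰, the action satisfies p* · red(pq*) = q* in N_c. -/

import Mathlib

/-- A directed graph with vertex set `V`, edge set `E`, source map `s` and range map `r`. -/
structure DiGraph where
  V : Type
  E : Type
  s : E → V
  r : E → V

namespace DiGraph

variable (G : DiGraph)

/-- There is an edge from `u` to `w`. -/
def Step (u w : G.V) : Prop := ∃ e : G.E, G.s e = u ∧ G.r e = w

/-- `G.Reach u w` means `u ≥ w`: there is a (possibly trivial) directed path from `u` to `w`. -/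
def Reach (u w : G.V) : Prop := Relation.ReflTransGen G.Step u w

/-- The root `R(W)` of a set of vertices `W`. -/
def root (W : Set G.V) : Set G.V := {u | ∃ w ∈ W, G.Reach u w}

/-- A set `H` of vertices is hereditary if `u ∈ H` and `u ≥ w` imply `w ∈ H`. -/
def Hereditary (H : Set G.V) : Prop := ∀ u ∈ H, ∀ w, G.Reach u w → w ∈ H

/-- A vertex is regular if it emits at least one and only finitely many edges. -/
def Regular (v : G.V) : Prop := (G.s ⁻¹' {v}).Nonempty ∧ (G.s ⁻¹' {v}).Finite

/-- A set `H` is saturated if every regular vertex all of whose out-edges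
have ranges in `H` lies in `H`. -/
def Saturated (H : Set G.V) : Prop :=
  ∀ v, G.Regular v → (∀ e, G.s e = v → G.r e ∈ H) → v ∈ H

/-- A set of vertices is downwards directed if every two of its elements have a
common lower bound in it. -/
def DownDirected (W : Set G.V) : Prop :=
  ∀ u ∈ W, ∀ v ∈ W, ∃ w ∈ W, G.Reach u w ∧ G.Reach v w

/-- The Countable Separation Property of a set of vertices. -/
def CSP (W : Set G.V) : Prop := ∃ C : Set G.V, C.Countable ∧ W ⊆ G.root C

/-- The Inner Countable Separation Property of a set of vertices. -/
def ICSP (W : Set G.V) : Prop := ∃ C : Set G.V, C.Countable ∧ C ⊆ W ∧ W ⊆ G.root C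

/-- `G.IsPathFrom v l` : the list of edges `l` forms a directed path starting at `v`. -/
def IsPathFrom : (G : DiGraph) → G.V → List G.E → Prop
  | _, _, [] => True
  | G, v, e :: es => G.s e = v ∧ G.IsPathFrom (G.r e) es

/-- The end (range) vertex of a path `l` starting at `v`. -/
def pathEnd : (G : DiGraph) → G.V → List G.E → G.V
  | _, v, [] => v
  | G, _, e :: es => G.pathEnd (G.r e) es

/-- The set of vertices on a path `l` starting at `v`. -/
def pathVerts (v : G.V) (l : List G.E) : Set G.V := insert v {w | ∃ e ∈ l, G.r e = w}

/-- A cycle based at `v` : a nonempty closed path in which distinct edges have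
distinct sources. -/
def IsCycle (v : G.V) (l : List G.E) : Prop :=
  l ≠ [] ∧ G.IsPathFrom v l ∧ G.pathEnd v l = v ∧ (l.map G.s).Nodup

/-- A cycle is exclusive if no vertex on it is the base of a cycle distinct from it
(cycles being identified with their sets of edges). -/
def ExclusiveCycle (v : G.V) (l : List G.E) : Prop :=
  G.IsCycle v l ∧ ∀ u ∈ G.pathVerts v l, ∀ m, G.IsCycle u m → (∀ e, e ∈ m ↔ e ∈ l)

open Classical in
/-- Auxiliary reduction on reversed edge lists: cancel common initial segments. -/
noncomputable def redAux (G : DiGraph) : List G.E → List G.E → List G.E × List G.E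
  | a :: as, b :: bs => if a = b then redAux G as bs else (a :: as, b :: bs)
  | as, bs => (as, bs)

/-- The reduction function: `red (p, q)` cancels the common final edges of the
paths `p` and `q`, implementing `red(ee*q*) = q*` and `red(pee*q*) = red(pq*)`. -/
noncomputable def red (p q : List G.E) : List G.E × List G.E :=
  ((G.redAux p.reverse q.reverse).1.reverse, (G.redAux p.reverse q.reverse).2.reverse)

/-- The source vertex of an element `pq*` (with `q` a path starting at the base
vertex `v`): the source of `p` if `p` is nonempty, and `r(q)` otherwise. -/
def startVtx (v : G.V) : List G.E × List G.E → G.V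
  | ([], q) => G.pathEnd v q
  | (e :: _, _) => G.s e

/-- Membership in the set `Y` associated to a cycle `c` (based at `cv`, with edges
`cl`) and a vertex `v ∈ c⁰`: pairs `(p, q)` of paths with `r(p) = r(q) ∈ c⁰` and
`s(q) = v`. -/
def MemY (cv : G.V) (cl : List G.E) (v : G.V) (x : List G.E × List G.E) : Prop :=
  G.IsPathFrom (G.startVtx v x) x.1 ∧ G.IsPathFrom v x.2 ∧
    G.pathEnd (G.startVtx v x) x.1 = G.pathEnd v x.2 ∧
    G.pathEnd v x.2 ∈ G.pathVerts cv cl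

/-- The degree `|p| − |q|` of an element `pq*`. -/
def degOf (G : DiGraph) (x : List G.E × List G.E) : ℤ :=
  (x.1.length : ℤ) - (x.2.length : ℤ)

/-- The branching system `X`: reduced elements of `Y`. -/
def Xset (cv : G.V) (cl : List G.E) (v : G.V) : Set (List G.E × List G.E) :=
  {x | G.MemY cv cl v x ∧ G.red x.1 x.2 = x}

/-- The subset `X_w` of `X` of elements with source vertex `w`. -/
def Xvtx (cv : G.V) (cl : List G.E) (v : G.V) (w : G.V) : Set (List G.E × List G.E) :=
  {x ∈ G.Xset cv cl v | G.startVtx v x = w}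

/-- The subset `X_e` of `X` of elements of the form `red(e r s*)` with `e r s* ∈ Y`. -/
def Xedge (cv : G.V) (cl : List G.E) (v : G.V) (e : G.E) : Set (List G.E × List G.E) :=
  {x | ∃ rs : List G.E × List G.E, G.MemY cv cl v (e :: rs.1, rs.2) ∧
    x = G.red (e :: rs.1) rs.2}

/-- The map `σ_e : X_{r(e)} → X_e`, `pq* ↦ red(e p q*)`. -/
noncomputable def sigmaE (e : G.E) (x : List G.E × List G.E) : List G.E × List G.E :=
  G.red (e :: x.1) x.2

end DiGraph

noncomputable section
open Classical

variable (K : Type) [Field K] (G : DiGraph)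

/-- Generators of the Leavitt path algebra: vertices, edges and ghost edges. -/
abbrev LVGen (G : DiGraph) : Type := G.V ⊕ G.E ⊕ G.E

/-- The free algebra on the generators. -/
abbrev LFree : Type := FreeAlgebra K (LVGen G)

/-- Vertex generator. -/
def fv (v : G.V) : LFree K G := FreeAlgebra.ι K (Sum.inl v)
/-- Edge generator. -/
def fe (e : G.E) : LFree K G := FreeAlgebra.ι K (Sum.inr (Sum.inl e))
/-- Ghost edge generator. -/
def fg (e : G.E) : LFree K G := FreeAlgebra.ι K (Sum.inr (Sum.inr e))

/-- The defining relations of the Leavitt path algebra: the path algebra relations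
(V), (E) together with (CK1) and (CK2). -/
inductive LRel : LFree K G → LFree K G → Prop
  | vv : ∀ {v w : G.V}, v ≠ w → LRel (fv K G v * fv K G w) 0
  | v_idem : ∀ v : G.V, LRel (fv K G v * fv K G v) (fv K G v)
  | se : ∀ e : G.E, LRel (fv K G (G.s e) * fe K G e) (fe K G e)
  | er : ∀ e : G.E, LRel (fe K G e * fv K G (G.r e)) (fe K G e)
  | rg : ∀ e : G.E, LRel (fv K G (G.r e) * fg K G e) (fg K G e)
  | gs : ∀ e : G.E, LRel (fg K G e * fv K G (G.s e)) (fg K G e)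
  | ck1 : ∀ {e f : G.E}, e ≠ f → LRel (fg K G e * fe K G f) 0
  | ck1e : ∀ e : G.E, LRel (fg K G e * fe K G e) (fv K G (G.r e))
  | ck2 : ∀ (v : G.V) (h : (G.s ⁻¹' {v}).Finite), (G.s ⁻¹' {v}).Nonempty →
      LRel (fv K G v) (∑ e ∈ h.toFinset, fe K G e * fg K G e)

/-- The Leavitt path algebra `L_K(E)` of `G` over `K`. -/
abbrev LPA : Type := RingQuot (LRel K G)

/-- The image of a vertex in `L_K(E)`. -/
def lv (v : G.V) : LPA K G := RingQuot.mkAlgHom K (LRel K G) (fv K G v)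
/-- The image of an edge in `L_K(E)`. -/
def le (e : G.E) : LPA K G := RingQuot.mkAlgHom K (LRel K G) (fe K G e)
/-- The image of a ghost edge in `L_K(E)`. -/
def lg (e : G.E) : LPA K G := RingQuot.mkAlgHom K (LRel K G) (fg K G e)

/-- The element of `L_K(E)` associated to a path `p` (a list of edges). -/
def pProd (p : List G.E) : LPA K G := (p.map (le K G)).prod
/-- The element `q*` of `L_K(E)` associated to a path `q`. -/
def gProd (q : List G.E) : LPA K G := (q.reverse.map (lg K G)).prod

/-- The set of monomials `pq*` of degree `n` in `L_K(E)`. -/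
def MonSet (n : ℤ) : Set (LPA K G) :=
  {x | ∃ (u w : G.V) (p q : List G.E), G.IsPathFrom u p ∧ G.IsPathFrom w q ∧
    G.pathEnd u p = G.pathEnd w q ∧ (p.length : ℤ) - (q.length : ℤ) = n ∧
    x = lv K G u * pProd K G p * gProd K G q}

/-- The degree-`n` homogeneous component of `L_K(E)`: the `K`-linear span of the
monomials `pq*` with `|p| − |q| = n`. -/
def lpaComp (n : ℤ) : Submodule K (LPA K G) := Submodule.span K (MonSet K G n)

/-- A homogeneous element of `L_K(E)`. -/
def LHomog (x : LPA K G) : Prop := ∃ n : ℤ, x ∈ lpaComp K G n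

/-- The free `K`-module on the set of pairs `(p, q)`; the module `N_c = M(X)` is
the span of the basis elements indexed by `X`. -/
abbrev MFree : Type := (List G.E × List G.E) →₀ K

/-- The action of a vertex `w` on a basis element `pq*`:
`w · pq* = pq*` if `s(p) = w`, else `0`. -/
def vAct (v w : G.V) (x : List G.E × List G.E) : MFree K G :=
  if G.startVtx v x = w then Finsupp.single x 1 else 0

/-- The action of an edge `f` on a basis element `pq*`:
`f · pq* = red(f p q*)` if `s(p) = r(f)`, else `0`. -/
def eAct (v : G.V) (f : G.E) (x : List G.E × List G.E) : MFree K G :=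
  if G.startVtx v x = G.r f then Finsupp.single (G.red (f :: x.1) x.2) 1 else 0

/-- The action of a ghost edge `f*` on a basis element `pq*`:
`f* · pq* = σ_f⁻¹(pq*)` if `pq* ∈ X_f`, else `0`. -/
def gAct (v : G.V) (cl : List G.E) (f : G.E) (x : List G.E × List G.E) : MFree K G :=
  match x with
  | (e :: t, q) => if e = f then Finsupp.single (t, q) 1 else 0
  | ([], q) => if f ∈ cl ∧ G.s f = G.pathEnd v q then Finsupp.single ([], q ++ [f]) 1
      else 0

/-- Linear extension of an action on basis elements to the whole module. -/
def actM (F : List G.E × List G.E → MFree K G) (m : MFree K G) : MFree K G :=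
  m.sum fun x k => k • F x

/-- The action of `p* = eₙ* ⋯ e₁*` for a path `p = e₁ ⋯ eₙ`, applying `e₁*` first:
`(ep)* · x = p* · (e* · x)`. -/
def gPathAct (v : G.V) (cl : List G.E) : List G.E → MFree K G → MFree K G
  | [], m => m
  | e :: t, m => gPathAct v cl t (actM K G (gAct K G v cl e) m)

/-!
Write `red(pq*) = p'q'*`, so that `p = p's` and `q = q's` for the cancelled common tail `s`.
The ghost path `p'*` strips `p'` off the first component, leaving `q'*`, and each further
ghost edge `f*` of `s*` then acts by `q'* ↦ (q'f)*`, provided `f` lies on `c`. All edges of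
`q` do: `q` runs from `v ∈ c⁰` into `c⁰`, so each of its edges closes up along `c` to a closed
path, hence lies on a cycle through a vertex of `c`, which by exclusivity is `c` itself.
-/

namespace DiGraph

variable {G : DiGraph}

@[simp] theorem pathEnd_nil (u : G.V) : G.pathEnd u [] = u := by simp [pathEnd]

@[simp] theorem pathEnd_cons (u : G.V) (e : G.E) (l : List G.E) :
    G.pathEnd u (e :: l) = G.pathEnd (G.r e) l := by simp [pathEnd]

@[simp] theorem isPathFrom_nil (u : G.V) : G.IsPathFrom u [] := by simp [IsPathFrom]

@[simp] theorem isPathFrom_cons {u : G.V} {e : G.E} {l : List G.E} :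
    G.IsPathFrom u (e :: l) ↔ G.s e = u ∧ G.IsPathFrom (G.r e) l := by
  simp [IsPathFrom]

theorem pathEnd_append (u : G.V) (l₁ l₂ : List G.E) :
    G.pathEnd u (l₁ ++ l₂) = G.pathEnd (G.pathEnd u l₁) l₂ := by
  induction l₁ generalizing u with
  | nil => simp
  | cons e t ih => simp [ih]

theorem isPathFrom_append {u : G.V} {l₁ l₂ : List G.E} :
    G.IsPathFrom u (l₁ ++ l₂) ↔ G.IsPathFrom u l₁ ∧ G.IsPathFrom (G.pathEnd u l₁) l₂ := by
  induction l₁ generalizing u with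
  | nil => simp
  | cons e t ih => simp [ih, and_assoc]

theorem IsPathFrom.exists_nodup {w : G.V} {d : List G.E} (hd : G.IsPathFrom w d) :
    ∃ d', G.IsPathFrom w d' ∧ G.pathEnd w d' = G.pathEnd w d ∧
      (G.pathEnd w d :: d'.map G.s).Nodup := by
  induction d generalizing w with
  | nil => exact ⟨[], isPathFrom_nil w, rfl, by simp⟩
  | cons e t ih =>
    obtain ⟨rfl, ht⟩ := isPathFrom_cons.1 hd
    obtain ⟨t', ht', hend, hnd⟩ := ih ht
    simp only [pathEnd_cons]
    by_cases hclosed : G.s e = G.pathEnd (G.r e) t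
    · exact ⟨[], isPathFrom_nil _, by rw [pathEnd_nil, hclosed], by simp⟩
    by_cases hrevisit : G.s e ∈ t'.map G.s
    · -- `s e` is visited again further on: cut out the loop in between
      obtain ⟨g, hg, hge⟩ := List.mem_map.1 hrevisit
      obtain ⟨a, b, rfl⟩ := List.append_of_mem hg
      have hb := (isPathFrom_cons.1 (isPathFrom_append.1 ht').2).2
      refine ⟨g :: b, isPathFrom_cons.2 ⟨hge, hb⟩, ?_, ?_⟩
      · rw [← hend, pathEnd_append, pathEnd_cons, pathEnd_cons]
      · refine hnd.sublist (List.Sublist.cons_cons _ ?_)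
        exact (List.suffix_append a (g :: b)).sublist.map G.s
    · refine ⟨e :: t', isPathFrom_cons.2 ⟨rfl, ht'⟩, by rw [pathEnd_cons, hend], ?_⟩
      rw [List.nodup_cons] at hnd
      simp only [List.map_cons, List.nodup_cons, List.mem_cons, not_or]
      exact ⟨⟨Ne.symm hclosed, hnd.1⟩, hrevisit, hnd.2⟩

theorem exists_isCycle_mem_of_isPathFrom {e : G.E} {d : List G.E}
    (hd : G.IsPathFrom (G.r e) d) (hend : G.pathEnd (G.r e) d = G.s e) :
    ∃ m, G.IsCycle (G.s e) m ∧ e ∈ m := by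
  obtain ⟨d', hd', hend', hnd⟩ := hd.exists_nodup
  rw [hend] at hend' hnd
  refine ⟨e :: d', ⟨List.cons_ne_nil _ _, isPathFrom_cons.2 ⟨rfl, hd'⟩, ?_, ?_⟩, List.mem_cons_self⟩
  · rw [pathEnd_cons, hend']
  · rwa [List.map_cons]

theorem exists_append_eq_of_mem_pathVerts {cv z : G.V} {cl : List G.E}
    (hz : z ∈ G.pathVerts cv cl) : ∃ a a', cl = a ++ a' ∧ G.pathEnd cv a = z := by
  rcases hz with rfl | ⟨e, he, rfl⟩
  · exact ⟨[], cl, rfl, pathEnd_nil _⟩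
  · obtain ⟨a, a', rfl⟩ := List.append_of_mem he
    exact ⟨a ++ [e], a', by simp, by simp [pathEnd_append]⟩

theorem range_mem_pathVerts {cv : G.V} {cl : List G.E} {e : G.E} (he : e ∈ cl) :
    G.r e ∈ G.pathVerts cv cl :=
  Or.inr ⟨e, he, rfl⟩

/-- Go around the cycle to its base, then on to `u`. -/
theorem IsCycle.exists_path {cv : G.V} {cl : List G.E} (hc : G.IsCycle cv cl)
    {w u : G.V} (hw : w ∈ G.pathVerts cv cl) (hu : u ∈ G.pathVerts cv cl) :
    ∃ d, G.IsPathFrom w d ∧ G.pathEnd w d = u := by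
  obtain ⟨-, hp, hend, -⟩ := hc
  obtain ⟨a, a', rfl, rfl⟩ := exists_append_eq_of_mem_pathVerts hw
  obtain ⟨b, b', hb, rfl⟩ := exists_append_eq_of_mem_pathVerts hu
  have hbase : G.pathEnd (G.pathEnd cv a) a' = cv := by rw [← pathEnd_append, hend]
  have hpb : G.IsPathFrom cv b := (isPathFrom_append.1 (hb ▸ hp)).1
  refine ⟨a' ++ b, isPathFrom_append.2 ⟨(isPathFrom_append.1 hp).2, by rwa [hbase]⟩, ?_⟩
  rw [pathEnd_append, hbase]

theorem ExclusiveCycle.subset_of_isPathFrom {cv : G.V} {cl : List G.E}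
    (hc : G.ExclusiveCycle cv cl) {u : G.V} {m : List G.E} (hu : u ∈ G.pathVerts cv cl)
    (hm : G.IsPathFrom u m) (hend : G.pathEnd u m ∈ G.pathVerts cv cl) : m ⊆ cl := by
  induction m generalizing u with
  | nil => exact List.nil_subset _
  | cons e t ih =>
    obtain ⟨rfl, ht⟩ := isPathFrom_cons.1 hm
    rw [pathEnd_cons] at hend
    have he : e ∈ cl := by
      obtain ⟨d, hd, hdend⟩ := hc.1.exists_path hend hu
      obtain ⟨m, hcyc, hem⟩ := exists_isCycle_mem_of_isPathFrom (d := t ++ d)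
        (isPathFrom_append.2 ⟨ht, hd⟩) (by rw [pathEnd_append, hdend])
      exact (hc.2 _ hu m hcyc e).1 hem
    exact List.cons_subset.2 ⟨he, ih (range_mem_pathVerts he) ht hend⟩

theorem redAux_eq_append (l₁ l₂ : List G.E) :
    ∃ t, l₁ = t ++ (G.redAux l₁ l₂).1 ∧ l₂ = t ++ (G.redAux l₁ l₂).2 := by
  induction l₁ generalizing l₂ with
  | nil => exact ⟨[], by simp [redAux], by simp [redAux]⟩
  | cons a as ih =>
    cases l₂ with
    | nil => exact ⟨[], by simp [redAux], by simp [redAux]⟩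
    | cons b bs =>
      by_cases hab : a = b
      · subst hab
        obtain ⟨t, h₁, h₂⟩ := ih bs
        exact ⟨a :: t, by simp [redAux, ← h₁], by simp [redAux, ← h₂]⟩
      · exact ⟨[], by simp [redAux, hab], by simp [redAux, hab]⟩

theorem red_eq_append (p q : List G.E) :
    ∃ s, p = (G.red p q).1 ++ s ∧ q = (G.red p q).2 ++ s := by
  obtain ⟨t, h₁, h₂⟩ := G.redAux_eq_append p.reverse q.reverse
  refine ⟨t.reverse, ?_, ?_⟩
  · rw [red, ← List.reverse_append, ← h₁, List.reverse_reverse]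
  · rw [red, ← List.reverse_append, ← h₂, List.reverse_reverse]

end DiGraph

section

variable {K} {G}

theorem actM_single (F : List G.E × List G.E → MFree K G) (x : List G.E × List G.E) :
    actM K G F (Finsupp.single x 1) = F x := by
  rw [actM, Finsupp.sum_single_index (by simp), one_smul]

theorem gPathAct_append_single (v : G.V) (cl a m q : List G.E) :
    gPathAct K G v cl (a ++ m) (Finsupp.single (a, q) 1) =
      gPathAct K G v cl m (Finsupp.single ([], q) 1) := by
  induction a with
  | nil => rfl
  | cons e t ih => rw [List.cons_append, gPathAct, actM_single, gAct, if_pos rfl, ih]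

theorem gPathAct_single_nil {v : G.V} {cl m q : List G.E} (hm : m ⊆ cl)
    (hpath : G.IsPathFrom v (q ++ m)) :
    gPathAct K G v cl m (Finsupp.single ([], q) 1) = Finsupp.single ([], q ++ m) 1 := by
  induction m generalizing q with
  | nil => simp [gPathAct]
  | cons f t ih =>
    obtain ⟨hf, ht⟩ := List.cons_subset.1 hm
    have hsf : G.s f = G.pathEnd v q :=
      (DiGraph.isPathFrom_cons.1 (DiGraph.isPathFrom_append.1 hpath).2).1
    rw [gPathAct, actM_single, gAct, if_pos ⟨hf, hsf⟩, ih ht (by simpa using hpath),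
      List.append_assoc, List.singleton_append]

end

theorem gPathAct_red (cv : G.V) (cl : List G.E)
    (hc : G.ExclusiveCycle cv cl) (v : G.V) (hv : v ∈ G.pathVerts cv cl)
    (x : List G.E × List G.E) (hx : G.MemY cv cl v x) :
    gPathAct K G v cl x.1 (Finsupp.single (G.red x.1 x.2) 1) =
      Finsupp.single (([] : List G.E), x.2) 1 := by
  obtain ⟨p, q⟩ := x
  obtain ⟨-, hq, -, hqc⟩ := hx
  obtain ⟨s, hp, hq'⟩ := G.red_eq_append p q
  generalize G.red p q = r at hp hq' ⊢
  obtain ⟨p', q'⟩ := r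
  subst hp hq'
  have hs : s ⊆ cl := List.Subset.trans (List.subset_append_right q' s)
    (hc.subset_of_isPathFrom hv hq hqc)
  rw [gPathAct_append_single, gPathAct_single_nil hs hq]

end
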